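/- arXiv:2510.07641 — 2 statements merged into one kernel-verified Lean document; each statement's English description precedes it below -/
import Mathlib

section
/- The formal system ATM proves the sentence A[L₂] → A[⊥̇]; that is, ATM proves that if the assertible liar sentence is assertible then the falsum sentence is assertible. -/
namespace ATM

/-- Terms of ATM: built from ⊥̇ and constants L₁, L₂, … by the dotted
connectives ∧̇, ∨̇, →̇ and the dotted predicates Ȧ[·], Ṫ[·], Ṁ[·]. -/
inductive Term : Type
  | bot  : Term
  | L    : ℕ → Term
  | and  : Term → Term → Term
  | or   : Term → Term → Term
  | imp  : Term → Term → Term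
  | A    : Term → Term
  | T    : Term → Term
  | M    : Term → Term

/-- Sentences of ATM: built from ⊥, A[t], T[t], M[t] by ∧, ∨, →. -/
inductive Sentence : Type
  | bot  : Sentence
  | A    : Term → Sentence
  | T    : Term → Sentence
  | M    : Term → Sentence
  | and  : Sentence → Sentence → Sentence
  | or   : Sentence → Sentence → Sentence
  | imp  : Sentence → Sentence → Sentence

/-- ¬̇t abbreviates t →̇ ⊥̇. -/
def Term.neg (t : Term) : Term := Term.imp t Term.bot

/-- s ↔̇ t abbreviates (s →̇ t) ∧̇ (t →̇ s). -/
def Term.iff (s t : Term) : Term := Term.and (Term.imp s t) (Term.imp t s)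

/-- ¬φ abbreviates φ → ⊥. -/
def Sentence.neg (φ : Sentence) : Sentence := Sentence.imp φ Sentence.bot

/-- φ ↔ ψ abbreviates (φ → ψ) ∧ (ψ → φ). -/
def Sentence.iff (φ ψ : Sentence) : Sentence :=
  Sentence.and (Sentence.imp φ ψ) (Sentence.imp ψ φ)

/-- The canonical term φ̇ of a sentence φ, obtained by dotting every symbol. -/
def Sentence.dot : Sentence → Term
  | Sentence.bot     => Term.bot
  | Sentence.A t     => Term.A t
  | Sentence.T t     => Term.T t
  | Sentence.M t     => Term.M t
  | Sentence.and φ ψ => Term.and φ.dot ψ.dot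
  | Sentence.or φ ψ  => Term.or φ.dot ψ.dot
  | Sentence.imp φ ψ => Term.imp φ.dot ψ.dot

/-- Evaluation t̂ of a term t to a sentence, relative to an assignment
θ of a sentence θᵢ to each constant Lᵢ.  (The θᵢ may be chosen in any
manner; the theorems below hypothesize θ₁ = ¬T[L₁] and θ₂ = ¬A[L₂].) -/
def Term.eval (θ : ℕ → Sentence) : Term → Sentence
  | Term.bot     => Sentence.bot
  | Term.L i     => θ i
  | Term.A t     => Sentence.A t
  | Term.T t     => Sentence.T t
  | Term.M t     => Sentence.M t
  | Term.and s t => Sentence.and (s.eval θ) (t.eval θ)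
  | Term.or s t  => Sentence.or (s.eval θ) (t.eval θ)
  | Term.imp s t => Sentence.imp (s.eval θ) (t.eval θ)

/-- Grounded sentences: the smallest set of sentences containing ⊥, all A[t]
and all M[t], closed under ∧, ∨, →, and containing T[t] whenever t̂ is in
the set. -/
inductive Grounded (θ : ℕ → Sentence) : Sentence → Prop
  | bot : Grounded θ Sentence.bot
  | A (t : Term) : Grounded θ (Sentence.A t)
  | M (t : Term) : Grounded θ (Sentence.M t)
  | and {φ ψ : Sentence} : Grounded θ φ → Grounded θ ψ → Grounded θ (Sentence.and φ ψ)
  | or {φ ψ : Sentence} : Grounded θ φ → Grounded θ ψ → Grounded θ (Sentence.or φ ψ)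
  | imp {φ ψ : Sentence} : Grounded θ φ → Grounded θ ψ → Grounded θ (Sentence.imp φ ψ)
  | T {t : Term} : Grounded θ (t.eval θ) → Grounded θ (Sentence.T t)

/-- `HilbertAxT s t u a` : the term `a` is the instance `Ȧ(s,t,u)` at the
terms `s`, `t`, `u` of one of the axiom schemes `A` of a fixed standard
Hilbert-style axiomatization of intuitionistic propositional logic. -/
inductive HilbertAxT : Term → Term → Term → Term → Prop
  | imp1 (s t u : Term) : HilbertAxT s t u (Term.imp s (Term.imp t s))
  | imp2 (s t u : Term) : HilbertAxT s t u
      (Term.imp (Term.imp s (Term.imp t u))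
        (Term.imp (Term.imp s t) (Term.imp s u)))
  | andE1 (s t u : Term) : HilbertAxT s t u (Term.imp (Term.and s t) s)
  | andE2 (s t u : Term) : HilbertAxT s t u (Term.imp (Term.and s t) t)
  | andI (s t u : Term) : HilbertAxT s t u (Term.imp s (Term.imp t (Term.and s t)))
  | orI1 (s t u : Term) : HilbertAxT s t u (Term.imp s (Term.or s t))
  | orI2 (s t u : Term) : HilbertAxT s t u (Term.imp t (Term.or s t))
  | orE (s t u : Term) : HilbertAxT s t u
      (Term.imp (Term.imp s u)
        (Term.imp (Term.imp t u) (Term.imp (Term.or s t) u)))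
  | exfalso (s t u : Term) : HilbertAxT s t u (Term.imp Term.bot s)

/-- Theorems of ATM: the axioms (logical axioms and nonlogical schemes
(1)–(9)) closed under the three deduction rules (conjunction, modus
ponens, release). -/
inductive Thm (θ : ℕ → Sentence) : Sentence → Prop
  -- logical axioms: (M[s] ∧ M[t] ∧ M[u]) → A[Ȧ(s,t,u)]
  | logical {s t u a : Term} (h : HilbertAxT s t u a) :
      Thm θ (Sentence.imp
        (Sentence.and (Sentence.and (Sentence.M s) (Sentence.M t)) (Sentence.M u))
        (Sentence.A a))
  -- (1) M[t] for t̂ grounded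
  | ax1 {t : Term} (h : Grounded θ (t.eval θ)) : Thm θ (Sentence.M t)
  -- (2) (M[s] ∧ M[t]) ↔ M[s ∧̇ t] ↔ M[s ∨̇ t] ↔ M[s →̇ t]
  | ax2and (s t : Term) :
      Thm θ (Sentence.iff (Sentence.and (Sentence.M s) (Sentence.M t))
        (Sentence.M (Term.and s t)))
  | ax2or (s t : Term) :
      Thm θ (Sentence.iff (Sentence.and (Sentence.M s) (Sentence.M t))
        (Sentence.M (Term.or s t)))
  | ax2imp (s t : Term) :
      Thm θ (Sentence.iff (Sentence.and (Sentence.M s) (Sentence.M t))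
        (Sentence.M (Term.imp s t)))
  -- (3) A[t] → M[t]
  | ax3 (t : Term) : Thm θ (Sentence.imp (Sentence.A t) (Sentence.M t))
  -- (4) (A[s] ∧ A[t]) → A[s ∧̇ t]
  | ax4 (s t : Term) :
      Thm θ (Sentence.imp (Sentence.and (Sentence.A s) (Sentence.A t))
        (Sentence.A (Term.and s t)))
  -- (5) (A[s] ∧ A[s →̇ t]) → A[t]
  | ax5 (s t : Term) :
      Thm θ (Sentence.imp (Sentence.and (Sentence.A s) (Sentence.A (Term.imp s t)))
        (Sentence.A t))
  -- (6) M[t] → A[t →̇ Ȧ[t]]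
  | ax6 (t : Term) :
      Thm θ (Sentence.imp (Sentence.M t) (Sentence.A (Term.imp t (Term.A t))))
  -- (7) M[t] → A[t ↔̇ Ṫ[t]]
  | ax7 (t : Term) :
      Thm θ (Sentence.imp (Sentence.M t) (Sentence.A (Term.iff t (Term.T t))))
  -- (8) ¬M[t] → A[¬̇Ṫ[t]]
  | ax8 (t : Term) :
      Thm θ (Sentence.imp (Sentence.neg (Sentence.M t))
        (Sentence.A (Term.neg (Term.T t))))
  -- (9) M[t] → A[t ↔̇ t'] whenever t̂ = t̂'
  | ax9 {t t' : Term} (h : t.eval θ = t'.eval θ) :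
      Thm θ (Sentence.imp (Sentence.M t) (Sentence.A (Term.iff t t')))
  -- deduction rules
  | conj {φ ψ : Sentence} : Thm θ φ → Thm θ ψ → Thm θ (Sentence.and φ ψ)
  | mp {φ ψ : Sentence} : Thm θ φ → Thm θ (Sentence.imp φ ψ) → Thm θ ψ
  | release {t : Term} : Thm θ (Sentence.A t) → Thm θ (t.eval θ)

/-- θ₁ is the classical liar sentence ¬T[L₁]. -/
def liar1 : Sentence := Sentence.neg (Sentence.T (Term.L 1))

/-- θ₂ is the assertible liar sentence ¬A[L₂]. -/
def liar2 : Sentence := Sentence.neg (Sentence.A (Term.L 2))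

/-! ATM reasons under A[·]: for terms with grounded value the premises M[s], M[t], M[u] of
the logical axioms are instances of axiom (1), and axiom (5) is modus ponens, so ATM asserts
whatever intuitionistic logic derives from asserted grounded terms; release then turns an
asserted tautology into an inference between sentences. The term L₂ evaluates to ¬A[L₂]:
assuming L₂, axiom (6) gives Ȧ[L₂] and axiom (9) gives ¬̇Ȧ[L₂], so ATM asserts ¬̇L₂, and
axiom (5) instantiated at ⊥̇ together with A[¬̇L₂] yields A[L₂] → A[⊥̇]. -/

section Internal

variable {θ : ℕ → Sentence} {Γ : List Term}

abbrev Term.IsGrounded (θ : ℕ → Sentence) (t : Term) : Prop := Grounded θ (t.eval θ)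

theorem Term.isGrounded_imp {a b : Term} :
    (Term.imp a b).IsGrounded θ ↔ a.IsGrounded θ ∧ b.IsGrounded θ :=
  ⟨fun h => by cases h with | imp ha hb => exact ⟨ha, hb⟩, fun h => Grounded.imp h.1 h.2⟩

theorem HilbertAxT.isGrounded {s t u a : Term} (h : HilbertAxT s t u a)
    (hs : s.IsGrounded θ) (ht : t.IsGrounded θ) (hu : u.IsGrounded θ) : a.IsGrounded θ := by
  cases h <;> repeat (first | assumption | constructor)

theorem Sentence.eval_dot (φ : Sentence) : φ.dot.eval θ = φ := by
  induction φ <;> simp only [Sentence.dot, Term.eval, *]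

theorem Sentence.isGrounded_dot {φ : Sentence} : φ.dot.IsGrounded θ ↔ Grounded θ φ := by
  rw [Term.IsGrounded, Sentence.eval_dot]

inductive Derivable (θ : ℕ → Sentence) (Γ : List Term) : Term → Prop
  | hyp {a : Term} : a ∈ Γ → Derivable θ Γ a
  | assert {a : Term} : a.IsGrounded θ → Thm θ (Sentence.A a) → Derivable θ Γ a
  | logical {s t u a : Term} : HilbertAxT s t u a →
      s.IsGrounded θ → t.IsGrounded θ → u.IsGrounded θ → Derivable θ Γ a
  | mp {a b : Term} : Derivable θ Γ a → Derivable θ Γ (Term.imp a b) → Derivable θ Γ b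

namespace Derivable

theorem isGrounded (hΓ : ∀ x ∈ Γ, x.IsGrounded θ) {a : Term} (d : Derivable θ Γ a) :
    a.IsGrounded θ := by
  induction d with
  | hyp ha => exact hΓ _ ha
  | assert ha _ => exact ha
  | logical h hs ht hu => exact h.isGrounded hs ht hu
  | mp _ _ _ ih => exact (Term.isGrounded_imp.1 ih).2

theorem sound {a : Term} (d : Derivable θ [] a) : Thm θ (Sentence.A a) := by
  induction d with
  | hyp ha => cases ha
  | assert _ ha => exact ha
  | logical h hs ht hu =>
      exact Thm.mp (Thm.conj (Thm.conj (Thm.ax1 hs) (Thm.ax1 ht)) (Thm.ax1 hu)) (Thm.logical h)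
  | mp _ _ iha ihab => exact Thm.mp (Thm.conj iha ihab) (Thm.ax5 _ _)

theorem imp_intro {a b : Term} (d : Derivable θ Γ a) (ha : a.IsGrounded θ)
    (hb : b.IsGrounded θ) : Derivable θ Γ (Term.imp b a) :=
  d.mp (logical (HilbertAxT.imp1 a b b) ha hb hb)

theorem imp_self {a : Term} (ha : a.IsGrounded θ) : Derivable θ Γ (Term.imp a a) := by
  have haa : (Term.imp a a).IsGrounded θ := Grounded.imp ha ha
  have k : Derivable θ Γ (Term.imp a (Term.imp (Term.imp a a) a)) :=
    logical (HilbertAxT.imp1 a (Term.imp a a) a) ha haa ha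
  have s := logical (Γ := Γ) (HilbertAxT.imp2 a (Term.imp a a) a) ha haa ha
  exact (logical (HilbertAxT.imp1 a a a) ha ha ha).mp (k.mp s)

theorem deduction {h : Term} (hΓ : ∀ x ∈ Γ, x.IsGrounded θ) (hh : h.IsGrounded θ) {a : Term}
    (d : Derivable θ (h :: Γ) a) : Derivable θ Γ (Term.imp h a) := by
  have hΓ' : ∀ x ∈ h :: Γ, x.IsGrounded θ := List.forall_mem_cons.2 ⟨hh, hΓ⟩
  induction d with
  | hyp ha =>
      rcases List.mem_cons.1 ha with rfl | ha
      · exact imp_self hh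
      · exact (hyp ha).imp_intro (hΓ _ ha) hh
  | assert ha ht => exact (assert ha ht).imp_intro ha hh
  | logical hx hs ht hu => exact (logical hx hs ht hu).imp_intro (hx.isGrounded hs ht hu) hh
  | @mp a b da dab iha ihab =>
      have ha := da.isGrounded hΓ'
      have hb := (Term.isGrounded_imp.1 (dab.isGrounded hΓ')).2
      exact iha.mp (ihab.mp (logical (HilbertAxT.imp2 h a b) hh ha hb))

end Derivable

theorem Thm.imp_of_and_imp {φ ψ χ : Sentence} (hφ : Grounded θ φ) (hψ : Grounded θ ψ)
    (hχ : Grounded θ χ) (h : Thm θ (Sentence.imp (Sentence.and φ ψ) χ)) (hψ' : Thm θ ψ) :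
    Thm θ (Sentence.imp φ χ) := by
  have gφ : φ.dot.IsGrounded θ := Sentence.isGrounded_dot.2 hφ
  have gψ : ψ.dot.IsGrounded θ := Sentence.isGrounded_dot.2 hψ
  have gh : (Term.imp (Term.and φ.dot ψ.dot) χ.dot).IsGrounded θ :=
    Grounded.imp (Grounded.and gφ gψ) (Sentence.isGrounded_dot.2 hχ)
  have dχ : Derivable θ [φ.dot, Term.imp (Term.and φ.dot ψ.dot) χ.dot, ψ.dot] χ.dot := by
    refine Derivable.mp (a := Term.and φ.dot ψ.dot) ?_ (.hyp (by simp))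
    refine Derivable.mp (a := ψ.dot) (.hyp (by simp)) ?_
    exact Derivable.mp (a := φ.dot) (.hyp (by simp))
      (.logical (HilbertAxT.andI φ.dot ψ.dot ψ.dot) gφ gψ gψ)
  have taut : Thm θ (Sentence.imp ψ
      (Sentence.imp (Sentence.imp (Sentence.and φ ψ) χ) (Sentence.imp φ χ))) := by
    have d := ((dχ.deduction (by simp [gh, gψ]) gφ).deduction (by simp [gψ]) gh).deduction
      (by simp) gψ
    simpa only [Term.eval, Sentence.eval_dot] using Thm.release d.sound
  exact Thm.mp h (Thm.mp hψ' taut)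

theorem Thm.assert_neg_of_eval_eq_neg_assert {t : Term}
    (ht : t.eval θ = Sentence.neg (Sentence.A t)) : Thm θ (Sentence.A (Term.neg t)) := by
  have gt : t.IsGrounded θ := by
    rw [Term.IsGrounded, ht]
    exact Grounded.imp (Grounded.A t) Grounded.bot
  have gA : (Term.A t).IsGrounded θ := Grounded.A t
  have gnA : (Term.neg (Term.A t)).IsGrounded θ := Grounded.imp gA Grounded.bot
  have hM : Thm θ (Sentence.M t) := Thm.ax1 gt
  have asserts_self : Thm θ (Sentence.A (Term.imp t (Term.A t))) := Thm.mp hM (Thm.ax6 t)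
  have denies_self : Thm θ (Sentence.A (Term.iff t (Term.neg (Term.A t)))) :=
    Thm.mp hM (Thm.ax9 ht)
  have g_to : (Term.imp t (Term.neg (Term.A t))).IsGrounded θ := Grounded.imp gt gnA
  have g_from : (Term.imp (Term.neg (Term.A t)) t).IsGrounded θ := Grounded.imp gnA gt
  have hbot : Derivable θ [t] Term.bot := by
    have hyp_t : Derivable θ [t] t := Derivable.hyp (List.mem_singleton_self t)
    have denial : Derivable θ [t] (Term.imp t (Term.neg (Term.A t))) :=
      (Derivable.assert (Grounded.and g_to g_from) denies_self).mp
        (Derivable.logical (HilbertAxT.andE1 _ _ Term.bot) g_to g_from Grounded.bot)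
    exact (hyp_t.mp (Derivable.assert (Grounded.imp gt gA) asserts_self)).mp (hyp_t.mp denial)
  exact (hbot.deduction (by simp) gt).sound

end Internal

theorem atm_proves_assert_liar_implies_assert_falsum_general (θ : ℕ → Sentence)
    (h2 : θ 2 = liar2) :
    Thm θ (Sentence.imp (Sentence.A (Term.L 2)) (Sentence.A Term.bot)) := by
  have hliar : Thm θ (Sentence.A (Term.neg (Term.L 2))) :=
    Thm.assert_neg_of_eval_eq_neg_assert h2
  exact Thm.imp_of_and_imp (Grounded.A _) (Grounded.A _) (Grounded.A _) (Thm.ax5 _ Term.bot) hliar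

theorem atm_proves_assert_liar_implies_assert_falsum (θ : ℕ → Sentence)
    (h1 : θ 1 = liar1) (h2 : θ 2 = liar2) :
    Thm θ (Sentence.imp (Sentence.A (Term.L 2)) (Sentence.A Term.bot)) :=
  atm_proves_assert_liar_implies_assert_falsum_general θ h2

end ATM
end

section
/- The formal system ATM proves the sentence (A[L₂] ∨ ¬A[L₂]) → A[⊥̇]; that is, ATM proves that if the assertible liar sentence is definitely either assertible or not assertible, then the falsum sentence is assertible. -/
namespace ATM

section Aux

variable {θ : ℕ → Sentence}

lemma eval_dot (σ : Sentence) : σ.dot.eval θ = σ := by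
  induction σ <;> simp [Sentence.dot, Term.eval, *]

lemma thmM {σ : Sentence} (h : Grounded θ σ) : Thm θ (Sentence.M σ.dot) :=
  Thm.ax1 (by rwa [eval_dot])

lemma hilbS {s t u a : Term} (h : HilbertAxT s t u a)
    (hs : Thm θ (Sentence.M s)) (ht : Thm θ (Sentence.M t)) (hu : Thm θ (Sentence.M u)) :
    Thm θ (a.eval θ) :=
  Thm.release (Thm.mp (Thm.conj (Thm.conj hs ht) hu) (Thm.logical h))

lemma sImp1 {σ τ : Sentence} (hσ : Grounded θ σ) (hτ : Grounded θ τ) :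
    Thm θ (Sentence.imp σ (Sentence.imp τ σ)) := by
  have := hilbS (HilbertAxT.imp1 σ.dot τ.dot σ.dot) (thmM hσ) (thmM hτ) (thmM hσ)
  simpa [Term.eval, eval_dot] using this

lemma sImp2 {σ τ ρ : Sentence} (hσ : Grounded θ σ) (hτ : Grounded θ τ) (hρ : Grounded θ ρ) :
    Thm θ (Sentence.imp (Sentence.imp σ (Sentence.imp τ ρ))
      (Sentence.imp (Sentence.imp σ τ) (Sentence.imp σ ρ))) := by
  have := hilbS (HilbertAxT.imp2 σ.dot τ.dot ρ.dot) (thmM hσ) (thmM hτ) (thmM hρ)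
  simpa [Term.eval, eval_dot] using this

lemma sAndI {σ τ : Sentence} (hσ : Grounded θ σ) (hτ : Grounded θ τ) :
    Thm θ (Sentence.imp σ (Sentence.imp τ (Sentence.and σ τ))) := by
  have := hilbS (HilbertAxT.andI σ.dot τ.dot σ.dot) (thmM hσ) (thmM hτ) (thmM hσ)
  simpa [Term.eval, eval_dot] using this

lemma sOrE {σ τ ρ : Sentence} (hσ : Grounded θ σ) (hτ : Grounded θ τ) (hρ : Grounded θ ρ) :
    Thm θ (Sentence.imp (Sentence.imp σ ρ)
      (Sentence.imp (Sentence.imp τ ρ) (Sentence.imp (Sentence.or σ τ) ρ))) := by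
  have := hilbS (HilbertAxT.orE σ.dot τ.dot ρ.dot) (thmM hσ) (thmM hτ) (thmM hρ)
  simpa [Term.eval, eval_dot] using this

lemma sExf {σ : Sentence} (hσ : Grounded θ σ) :
    Thm θ (Sentence.imp Sentence.bot σ) := by
  have := hilbS (HilbertAxT.exfalso σ.dot σ.dot σ.dot) (thmM hσ) (thmM hσ) (thmM hσ)
  simpa [Term.eval, eval_dot] using this

lemma impRefl {σ : Sentence} (h : Grounded θ σ) : Thm θ (Sentence.imp σ σ) :=
  Thm.mp (sImp1 h h) (Thm.mp (sImp1 h (Grounded.imp h h)) (sImp2 h (Grounded.imp h h) h))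

lemma impApp {σ τ ρ : Sentence} (hσ : Grounded θ σ) (hτ : Grounded θ τ) (hρ : Grounded θ ρ)
    (h1 : Thm θ (Sentence.imp σ (Sentence.imp τ ρ))) (h2 : Thm θ (Sentence.imp σ τ)) :
    Thm θ (Sentence.imp σ ρ) :=
  Thm.mp h2 (Thm.mp h1 (sImp2 hσ hτ hρ))

lemma impConst {σ τ : Sentence} (hσ : Grounded θ σ) (hτ : Grounded θ τ)
    (h : Thm θ τ) : Thm θ (Sentence.imp σ τ) :=
  Thm.mp h (sImp1 hτ hσ)

lemma impTrans {σ τ ρ : Sentence} (hσ : Grounded θ σ) (hτ : Grounded θ τ) (hρ : Grounded θ ρ)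
    (h1 : Thm θ (Sentence.imp σ τ)) (h2 : Thm θ (Sentence.imp τ ρ)) :
    Thm θ (Sentence.imp σ ρ) :=
  impApp hσ hτ hρ (impConst hσ (Grounded.imp hτ hρ) h2) h1

lemma impPair {σ τ ρ : Sentence} (hσ : Grounded θ σ) (hτ : Grounded θ τ) (hρ : Grounded θ ρ)
    (h1 : Thm θ (Sentence.imp σ τ)) (h2 : Thm θ (Sentence.imp σ ρ)) :
    Thm θ (Sentence.imp σ (Sentence.and τ ρ)) :=
  impApp hσ hρ (Grounded.and hτ hρ)
    (impTrans hσ hτ (Grounded.imp hρ (Grounded.and hτ hρ)) h1 (sAndI hτ hρ)) h2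

end Aux

theorem atm_proves_assert_liar_decided_implies_assert_falsum (θ : ℕ → Sentence)
    (h1 : θ 1 = liar1) (h2 : θ 2 = liar2) :
    Thm θ (Sentence.imp
      (Sentence.or (Sentence.A (Term.L 2)) (Sentence.neg (Sentence.A (Term.L 2))))
      (Sentence.A Term.bot)) := by
  set l : Term := Term.L 2 with hl
  set t' : Term := Term.imp (Term.A l) Term.bot with ht'
  set p : Sentence := Sentence.A l with hp
  set q : Sentence := Sentence.imp p Sentence.bot with hq
  have hevall : l.eval θ = q := by
    simp [hl, Term.eval, h2, liar2, Sentence.neg, hq, hp]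
  have hevalt' : t'.eval θ = q := by simp [ht', Term.eval, hq, hp]
  have gp : Grounded θ p := Grounded.A l
  have gb : Grounded θ Sentence.bot := Grounded.bot
  have gq : Grounded θ q := Grounded.imp gp gb
  have gab : Grounded θ (Sentence.A Term.bot) := Grounded.A Term.bot
  -- M[l]
  have ml : Thm θ (Sentence.M l) := Thm.ax1 (by rw [hevall]; exact gq)
  -- c1 : A[l →̇ Ȧ[l]]
  have c1 : Thm θ (Sentence.A (Term.imp l (Term.A l))) := Thm.mp ml (Thm.ax6 l)
  -- c2 : A[l →̇ t']
  have hee : l.eval θ = t'.eval θ := by rw [hevall, hevalt']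
  have iffA : Thm θ (Sentence.A (Term.iff l t')) := Thm.mp ml (Thm.ax9 hee)
  have mu : Thm θ (Sentence.M (Term.imp l t')) :=
    Thm.ax1 (by
      rw [show (Term.imp l t').eval θ = Sentence.imp (l.eval θ) (t'.eval θ) from rfl,
        hevall, hevalt']
      exact Grounded.imp gq gq)
  have mv : Thm θ (Sentence.M (Term.imp t' l)) :=
    Thm.ax1 (by
      rw [show (Term.imp t' l).eval θ = Sentence.imp (t'.eval θ) (l.eval θ) from rfl,
        hevall, hevalt']
      exact Grounded.imp gq gq)
  have andE : Thm θ (Sentence.A (Term.imp (Term.and (Term.imp l t') (Term.imp t' l))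
      (Term.imp l t'))) := by
    have log := Thm.logical (θ := θ)
      (HilbertAxT.andE1 (Term.imp l t') (Term.imp t' l) (Term.imp l t'))
    exact Thm.mp (Thm.conj (Thm.conj mu mv) mu) log
  have c2 : Thm θ (Sentence.A (Term.imp l t')) :=
    Thm.mp (Thm.conj iffA andE)
      (Thm.ax5 (Term.and (Term.imp l t') (Term.imp t' l)) (Term.imp l t'))
  -- grounded facts for A-sentences
  have gA : ∀ t : Term, Grounded θ (Sentence.A t) := Grounded.A
  -- H1 : p → A[⊥̇]
  have d1 : Thm θ (Sentence.imp p (Sentence.A (Term.A l))) :=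
    impTrans gp (Grounded.and gp (gA _)) (gA _)
      (impPair gp gp (gA _) (impRefl gp) (impConst gp (gA _) c1))
      (Thm.ax5 l (Term.A l))
  have d2 : Thm θ (Sentence.imp p (Sentence.A t')) :=
    impTrans gp (Grounded.and gp (gA _)) (gA _)
      (impPair gp gp (gA _) (impRefl gp) (impConst gp (gA _) c2))
      (Thm.ax5 l t')
  have H1 : Thm θ (Sentence.imp p (Sentence.A Term.bot)) :=
    impTrans gp (Grounded.and (gA _) (gA _)) gab
      (impPair gp (gA _) (gA _) d1 d2)
      (Thm.ax5 (Term.A l) Term.bot)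
  -- H2 : q → A[⊥̇]
  have e1 : Thm θ (Sentence.imp q p) := by
    have := Thm.release c1
    rwa [show (Term.imp l (Term.A l)).eval θ = Sentence.imp q p by
      rw [show (Term.imp l (Term.A l)).eval θ
        = Sentence.imp (l.eval θ) ((Term.A l).eval θ) from rfl, hevall]; rfl] at this
  have e2 : Thm θ (Sentence.imp q Sentence.bot) :=
    impApp gq gp gb (impRefl gq) e1
  have H2 : Thm θ (Sentence.imp q (Sentence.A Term.bot)) :=
    impTrans gq gb gab e2 (sExf gab)
  -- combine via orE
  have orE := sOrE (θ := θ) gp gq gab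
  exact Thm.mp H2 (Thm.mp H1 orE)

end ATM
end
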